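/- arXiv:2404.14380 — 4 statements merged into one kernel-verified Lean document; each statement's English description precedes it below -/
import Mathlib

section
/- Let A = (𝒜, d, 𝒫, m) be a rank-two arroid and i ∈ 𝒜. Define the deletion A ∖ i with ground set 𝒜 ∖ {i}, the same degrees, and points consisting of those p ∈ 𝒫 with i ∉ p, together with p ∖ {i} for points p ∋ i with p ≠ {i,j}, with inherited multiplicity functions. Then A ∖ i satisfies the Bézout property: for all distinct j, k ∈ 𝒜 ∖ {i}, the sum over points q of A ∖ i containing {j,k} of their multiplicities m_q(j,k) equals d_j d_k. -/
/-- For a rank-two arroid `A = (𝒜, d, 𝒫, m)` and `i ∈ 𝒜`, the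
deletion `A ∖ i` — whose points are the points `p` with `i ∉ p` together with
`p ∖ {i}` for points `p ∋ i` which are not of the form `{i, l}`, with
inherited multiplicities — satisfies the Bézout property: for all distinct
`j, k ∈ 𝒜 ∖ {i}`, the sum of multiplicities `m_q(j,k)` over the points `q`
of `A ∖ i` containing `{j, k}` equals `d j * d k`. -/
theorem deletion_bezout {n N : ℕ}
    (d : Fin n → ℕ) (hd : ∀ i, 0 < d i)
    (pt : Fin N → Finset (Fin n)) (m : Fin N → Fin n → Fin n → ℤ)
    (hsymm : ∀ p i j, m p i j = m p j i)
    (hlow : ∀ p, ∀ i ∈ pt p, ∀ j ∈ pt p, 1 ≤ m p i j)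
    (hupp : ∀ p, ∀ i ∈ pt p, ∀ j ∈ pt p, m p i j ≤ max (d i) (d j))
    (hBez : ∀ i j : Fin n, i ≠ j →
      ∑ p ∈ Finset.univ.filter (fun p => i ∈ pt p ∧ j ∈ pt p), m p i j
        = (d i : ℤ) * d j)
    (i : Fin n) :
    ∀ j k : Fin n, j ≠ k → j ≠ i → k ≠ i →
      ∑ p ∈ Finset.univ.filter (fun p =>
          j ∈ pt p ∧ k ∈ pt p ∧
            (i ∉ pt p ∨ ¬ ∃ l : Fin n, pt p = {i, l})),
        m p j k = (d j : ℤ) * d k := by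
  intro j k hjk hji hki
  have hset : (Finset.univ.filter (fun p =>
          j ∈ pt p ∧ k ∈ pt p ∧
            (i ∉ pt p ∨ ¬ ∃ l : Fin n, pt p = {i, l})))
      = Finset.univ.filter (fun p => j ∈ pt p ∧ k ∈ pt p) := by
    ext p
    simp only [Finset.mem_filter, Finset.mem_univ, true_and]
    constructor
    · rintro ⟨hj, hk, _⟩; exact ⟨hj, hk⟩
    · rintro ⟨hj, hk⟩
      refine ⟨hj, hk, ?_⟩
      by_cases hi : i ∈ pt p
      · right
        rintro ⟨l, hl⟩
        rw [hl] at hj hk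
        simp only [Finset.mem_insert, Finset.mem_singleton] at hj hk
        rcases hj with hj | hj
        · exact hji hj
        · rcases hk with hk | hk
          · exact hki hk
          · exact hjk (hj.trans hk.symm)
      · left; exact hi
  rw [hset]
  exact hBez j k hjk
end

section
/- Let A = (𝒜, d, 𝒫) be a transversal arroid of rank two with 𝒜 = {1,...,n}, and fix i ∈ 𝒜. In N = ℤⁿ / ⟨(d_1,...,d_n)⟩, the balancing condition around the ray ρ_i holds: the vector Σ_{p ∈ 𝒫^u, i ∈ p} w(p)·v_p, where v_p = Σ_{j ∈ p}[e_j], is an integer multiple of [e_i]. Specifically, using the Bézout property, Σ_{p ∈ 𝒫, i ∈ p} Σ_{j ∈ p} e_j ≡ c·e_i (mod (d_1,...,d_n)) for some integer c. -/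
lemma sum_boole_multiset {α : Type*} (M : Multiset α) (q : α → Prop) [DecidablePred q] :
    (M.map (fun a => if q a then (1:ℤ) else 0)).sum = (M.filter q).card := by
  induction M using Multiset.induction with
  | empty => simp
  | cons a M ih => by_cases h : q a <;> simp [h, ih, add_comm]

lemma msum_apply {α β : Type*} [AddCommMonoid β] (M : Multiset (α → β)) (k : α) :
    M.sum k = (M.map (fun f => f k)).sum := by
  induction M using Multiset.induction with
  | empty => simp
  | cons a M ih => simp [ih]



/-- For a transversal rank-two arroid `(𝒜, d, 𝒫)` with
`𝒜 = {1,…,n}` and a fixed `i ∈ 𝒜`, the balancing condition around the ray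
`ρ_i` holds in `N = ℤⁿ/⟨(d_1,…,d_n)⟩`: the sum over the multiset of points
containing `i` of the vectors `v_p = Σ_{j∈p}[e_j]` is an integer multiple
of `[e_i]`. -/
theorem rank_two_arroid_fan_balanced_at_divisor_ray {n : ℕ}
    (d : Fin n → ℕ) (hd : ∀ j, 0 < d j)
    (P : Multiset (Finset (Fin n)))
    (hBez : ∀ i j : Fin n, i ≠ j →
      (P.filter (fun p => i ∈ p ∧ j ∈ p)).card = d i * d j)
    (i : Fin n) :
    ∃ c : ℤ,
      (Submodule.Quotient.mk
          (((P.filter (fun p => i ∈ p)).map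
            (fun p => ∑ j ∈ p, Pi.single j (1 : ℤ))).sum)
        : (Fin n → ℤ) ⧸ Submodule.span ℤ {(fun j => (d j : ℤ))})
      = c • Submodule.Quotient.mk (Pi.single i (1 : ℤ)) := by
  set c : ℤ := ((P.filter (fun p => i ∈ p)).card : ℤ) - (d i : ℤ) * d i with hc
  refine ⟨c, ?_⟩
  have key : (((P.filter (fun p => i ∈ p)).map
        (fun p => ∑ j ∈ p, Pi.single j (1 : ℤ))).sum)
      = (d i : ℤ) • (fun j => (d j : ℤ)) + c • Pi.single i (1 : ℤ) := by
    funext k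
    have h1 : (((P.filter (fun p => i ∈ p)).map
            (fun p => ∑ j ∈ p, Pi.single j (1 : ℤ))).sum) k
        = (((P.filter (fun p => i ∈ p)).filter (fun p => k ∈ p)).card : ℤ) := by
      rw [msum_apply, Multiset.map_map, ← sum_boole_multiset]
      congr 1
      apply Multiset.map_congr rfl
      intro p _
      simp [Finset.sum_apply, Finset.sum_pi_single']
    rw [h1]
    have hff : (P.filter (fun p => i ∈ p)).filter (fun p => k ∈ p)
        = P.filter (fun p => i ∈ p ∧ k ∈ p) := by
      rw [Multiset.filter_filter]
      congr 1
      ext p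
      tauto
    by_cases hk : k = i
    · subst hk
      rw [hff]
      simp only [and_self]
      simp only [Pi.add_apply, Pi.smul_apply, Pi.single_eq_same, smul_eq_mul, mul_one]
      push_cast [hc]
      ring
    · have h2 := hBez i k (Ne.symm hk)
      rw [hff, h2]
      simp only [Pi.add_apply, Pi.smul_apply, Pi.single_eq_of_ne hk, smul_eq_mul, mul_zero,
        add_zero]
      push_cast
      ring
  rw [key]
  have hmem : (fun j => (d j : ℤ)) ∈ Submodule.span ℤ {(fun j => (d j : ℤ))} :=
    Submodule.mem_span_singleton_self _
  rw [Submodule.Quotient.mk_add, ← Submodule.Quotient.mk_smul,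
    (Submodule.Quotient.mk_eq_zero _).2 (Submodule.smul_mem _ _ hmem)]
  simp [Submodule.Quotient.mk_smul]
end

section
/- Let Σ_A be the fan of a transversal rank-two arroid A on ground set 𝒜 = {1,...,n}, and let i ∈ 𝒜. Then the reduced star of Σ_A at the ray ρ_i = cone([e_i]) equals the arroid fan Σ_{A/i} of the contraction A/i. That is, the projections to (ℤⁿ/⟨(d_1,...,d_n)⟩)/⟨[e_i]⟩ of the cones of Σ_A containing ρ_i coincide with the cones of Σ_{A/i} under the natural identification with ℤ^{n-1}/⟨(d_1,...,d̂_i,...,d_n)⟩ (degrees scaled by d_i). -/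
noncomputable section

/-- Ambient space of the arroid fan: `ℝⁿ/⟨(d_1,…,d_n)⟩`. -/
abbrev ArroidSpace (n : ℕ) (d : Fin n → ℕ) :=
  (Fin n → ℝ) ⧸ Submodule.span ℝ {(fun j => (d j : ℝ))}

/-- Class of the standard basis vector `e_j`. -/
def arroidE {n : ℕ} (d : Fin n → ℕ) (j : Fin n) : ArroidSpace n d :=
  Submodule.Quotient.mk (Pi.single j 1)

/-- Class of `v_p = Σ_{j ∈ p} e_j`. -/
def arroidV {n : ℕ} (d : Fin n → ℕ) (p : Finset (Fin n)) : ArroidSpace n d :=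
  Submodule.Quotient.mk (∑ j ∈ p, Pi.single j 1)

/-- Ray spanned by a vector. -/
def rayOf {V : Type*} [AddCommMonoid V] [Module ℝ V] (v : V) : Set V :=
  {x | ∃ t : ℝ, 0 ≤ t ∧ x = t • v}

/-- Two-dimensional cone spanned by two vectors. -/
def cone2 {V : Type*} [AddCommMonoid V] [Module ℝ V] (u v : V) : Set V :=
  {x | ∃ s t : ℝ, 0 ≤ s ∧ 0 ≤ t ∧ x = s • u + t • v}

lemma image_rayOf {V W : Type*} [AddCommGroup V] [Module ℝ V] [AddCommGroup W]
    [Module ℝ W] (f : V →ₗ[ℝ] W) (v : V) : f '' rayOf v = rayOf (f v) := by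
  ext x
  constructor
  · rintro ⟨y, ⟨t, ht, rfl⟩, rfl⟩
    exact ⟨t, ht, by simp⟩
  · rintro ⟨t, ht, rfl⟩
    exact ⟨t • v, ⟨t, ht, rfl⟩, by simp⟩

lemma image_cone2 {V W : Type*} [AddCommGroup V] [Module ℝ V] [AddCommGroup W]
    [Module ℝ W] (f : V →ₗ[ℝ] W) (u v : V) (hu : f u = 0) :
    f '' cone2 u v = rayOf (f v) := by
  ext x
  constructor
  · rintro ⟨y, ⟨s, t, hs, ht, rfl⟩, rfl⟩
    exact ⟨t, ht, by simp [hu]⟩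
  · rintro ⟨t, ht, rfl⟩
    exact ⟨(0:ℝ) • u + t • v, ⟨0, t, le_refl 0, ht, rfl⟩, by simp [hu]⟩

/-- For a transversal rank-two arroid `A` on `𝒜 = {1,…,n}` and
`i ∈ 𝒜`, the reduced star of the arroid fan `Σ_A` at the ray
`ρ_i = cone([e_i])` equals the fan `Σ_{A/i}` of the contraction `A/i`:
the projections to `(ℝⁿ/⟨(d_1,…,d_n)⟩)/⟨[e_i]⟩` of the cones of `Σ_A`
containing `ρ_i` (namely `ρ_i` itself and the two-dimensional cones
`σ_{i,p} = cone([e_i], v_p)` for points `p ∋ i`) coincide with the cones of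
the rank-one arroid fan `Σ_{A/i}` (the origin and the rays generated by
`v_{p∖{i}}` for `p ∋ i`). -/
theorem reduced_star_eq_contraction_fan {n : ℕ}
    (d : Fin n → ℕ) (hd : ∀ j, 0 < d j)
    (P : Multiset (Finset (Fin n)))
    (hBez : ∀ i j : Fin n, i ≠ j →
      (P.filter (fun p => i ∈ p ∧ j ∈ p)).card = d i * d j)
    (i : Fin n) :
    letI π := (Submodule.span ℝ {arroidE d i}).mkQ
    insert (π '' rayOf (arroidE d i))
        {S | ∃ p, p ∈ P ∧ i ∈ p ∧
          S = π '' cone2 (arroidE d i) (arroidV d p)}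
      = insert ({0} : Set (ArroidSpace n d ⧸ Submodule.span ℝ {arroidE d i}))
        {S | ∃ p, p ∈ P ∧ i ∈ p ∧
          S = rayOf (π (arroidV d (p.erase i)))} := by
  set π := (Submodule.span ℝ {arroidE d i}).mkQ with hπ
  have hπe : π (arroidE d i) = 0 := by
    rw [hπ, Submodule.mkQ_apply]
    exact (Submodule.Quotient.mk_eq_zero _).2
      (Submodule.mem_span_singleton_self (arroidE d i))
  have h1 : π '' rayOf (arroidE d i) = {0} := by
    rw [image_rayOf, hπe]
    ext x
    simp only [Set.mem_singleton_iff, rayOf, Set.mem_setOf_eq, smul_zero]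
    constructor
    · rintro ⟨t, _, rfl⟩; rfl
    · rintro rfl; exact ⟨0, le_refl 0, rfl⟩
  have h2 : ∀ p : Finset (Fin n), i ∈ p →
      π '' cone2 (arroidE d i) (arroidV d p) = rayOf (π (arroidV d (p.erase i))) := by
    intro p hip
    rw [image_cone2 π _ _ hπe]
    have hv : arroidV d p = arroidE d i + arroidV d (p.erase i) := by
      unfold arroidV arroidE
      rw [← Submodule.Quotient.mk_add, ← Finset.add_sum_erase _ _ hip]
    rw [hv, map_add, hπe, zero_add]
  rw [h1]
  congr 1
  ext S
  simp only [Set.mem_setOf_eq]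
  constructor
  · rintro ⟨p, hp, hip, rfl⟩; exact ⟨p, hp, hip, h2 p hip⟩
  · rintro ⟨p, hp, hip, rfl⟩; exact ⟨p, hp, hip, (h2 p hip).symm⟩
end
end

section
/- Let A = (𝒜, d, 𝒫) be a transversal rank-two arroid whose point multiset contains, for some i ∈ 𝒜 with d_i = 1, points p_1,...,p_m ∋ i such that every p_r contains another element j_r with d_{j_r} = 1 (each point through the 'line' i contains another 'line'), and such that for every element k ∈ 𝒜 with d_k = 2 passing through a point p_r ∋ i, the second point of 𝒫 containing {i,k} is among p_1,...,p_m. Suppose additionally the 'cluster graph' on {p_1,...,p_m} (edges between p_r, p_s when some degree-2 element lies in both) is connected. Then any collection of real coefficients (α_{p_r}) with Σ_r α_{p_r}·v_{p_r} ∈ ℝ·[e_i] in ℝⁿ/⟨(d_1,...,d_n)⟩ has all α_{p_r} equal; i.e. the ray ρ_i is uniquely balanced. -/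
/-- Let `A = (𝒜, d, 𝒫)` be a transversal rank-two arroid of
lines and conics (`d j ∈ {1,2}`), and let `i` be a line (`d i = 1`) such
that: every point through `i` contains another line; for every conic `k`
through a point on `i`, the second point of `𝒫` containing `{i,k}` is again
one of the points through `i`; and the cluster graph on the points through
`i` (edges given by common conics) is connected.  Then the ray `ρ_i` of the
arroid fan is uniquely balanced: any real coefficients `(α_p)` with
`Σ_p α_p · v_p ∈ ℝ·[e_i]` in `ℝⁿ/⟨(d_1,…,d_n)⟩` are all equal. -/
theorem line_ray_uniquely_balanced {n : ℕ}
    (d : Fin n → ℕ) (hd : ∀ j, d j = 1 ∨ d j = 2)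
    (P : Multiset (Finset (Fin n)))
    (hBez : ∀ j k : Fin n, j ≠ k →
      (P.filter (fun p => j ∈ p ∧ k ∈ p)).card = d j * d k)
    (i : Fin n) (hdi : d i = 1)
    -- the (distinct) points through the line `i`
    (Pts : Finset (Finset (Fin n)))
    (hPts : Pts = P.toFinset.filter (fun p => i ∈ p))
    -- every point through `i` contains another line
    (hline : ∀ p ∈ Pts, ∃ j ∈ p, j ≠ i ∧ d j = 1)
    -- the second point containing `{i, k}` for a conic `k` is among `Pts`
    (hsecond : ∀ kk : Fin n, d kk = 2 → ∀ p ∈ Pts, kk ∈ p →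
      ∀ q ∈ P.toFinset, i ∈ q → kk ∈ q → q ∈ Pts)
    -- the cluster graph (points joined by a common conic) is connected
    (hconn : ∀ p ∈ Pts, ∀ q ∈ Pts,
      Relation.ReflTransGen
        (fun u v => u ∈ Pts ∧ v ∈ Pts ∧ ∃ kk : Fin n, d kk = 2 ∧ kk ∈ u ∧ kk ∈ v)
        p q) :
    ∀ α : Finset (Fin n) → ℝ,
      (∑ p ∈ Pts, α p •
          (Submodule.Quotient.mk (∑ j ∈ p, Pi.single j (1 : ℝ))
            : (Fin n → ℝ) ⧸ Submodule.span ℝ {(fun j => (d j : ℝ))}))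
        ∈ Submodule.span ℝ
            {(Submodule.Quotient.mk (Pi.single i (1 : ℝ))
              : (Fin n → ℝ) ⧸ Submodule.span ℝ {(fun j => (d j : ℝ))})} →
      ∀ p ∈ Pts, ∀ q ∈ Pts, α p = α q := by
  intro α hα
  set D : Fin n → ℝ := fun j => (d j : ℝ) with hDdef
  rw [Submodule.mem_span_singleton] at hα
  obtain ⟨c, hc⟩ := hα
  set x : Fin n → ℝ := ∑ p ∈ Pts, α p • (∑ j ∈ p, Pi.single j (1 : ℝ)) with hxdef
  have hmk : (Submodule.Quotient.mk x : (Fin n → ℝ) ⧸ Submodule.span ℝ {D})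
      = Submodule.Quotient.mk (c • (Pi.single i (1 : ℝ) : Fin n → ℝ)) := by
    rw [hxdef, ← Submodule.mkQ_apply, map_sum]
    simp only [map_smul, Submodule.mkQ_apply]
    rw [← hc, ← Submodule.Quotient.mk_smul]
  have hmem : x - c • (Pi.single i (1 : ℝ) : Fin n → ℝ) ∈ Submodule.span ℝ {D} :=
    (Submodule.Quotient.eq _).mp hmk
  rw [Submodule.mem_span_singleton] at hmem
  obtain ⟨t, ht⟩ := hmem
  have hx : x = c • (Pi.single i (1 : ℝ) : Fin n → ℝ) + t • D := by
    rw [ht]; abel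
  have coord : ∀ k : Fin n,
      (∑ p ∈ Pts, α p * (if k ∈ p then (1:ℝ) else 0))
        = (if k = i then c else 0) + t * (d k : ℝ) := by
    intro k
    have := congrFun hx k
    simpa [hxdef, hDdef, Finset.sum_apply, Pi.single_apply, mul_ite] using this
  -- main claim: every coefficient equals t
  have key : ∀ p ∈ Pts, α p = t := by
    intro p hp
    obtain ⟨j, hjp, hji, hdj⟩ := hline p hp
    -- uniqueness: p is the only element of Pts containing j
    have huniq : ∀ q ∈ Pts, j ∈ q → q = p := by
      intro q hq hjq
      by_contra hne
      have hcard := hBez i j (Ne.symm hji)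
      have hmemP : ∀ r ∈ Pts, j ∈ r → r ∈ P.filter (fun r => i ∈ r ∧ j ∈ r) := by
        intro r hr hjr
        rw [hPts] at hr
        rcases Finset.mem_filter.mp hr with ⟨hrP, hir⟩
        exact Multiset.mem_filter.mpr ⟨Multiset.mem_toFinset.mp hrP, hir, hjr⟩
      have h2 : 2 ≤ (P.filter (fun r => i ∈ r ∧ j ∈ r)).card := by
        have hsub : ({q, p} : Finset (Finset (Fin n)))
            ⊆ (P.filter (fun r => i ∈ r ∧ j ∈ r)).toFinset := by
          intro r hr
          rcases Finset.mem_insert.mp hr with h | h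
          · exact Multiset.mem_toFinset.mpr (h ▸ hmemP q hq hjq)
          · exact Multiset.mem_toFinset.mpr ((Finset.mem_singleton.mp h) ▸ hmemP p hp hjp)
        calc 2 = ({q, p} : Finset (Finset (Fin n))).card := by
                  rw [Finset.card_insert_of_notMem (by simpa using hne),
                    Finset.card_singleton]
          _ ≤ (P.filter (fun r => i ∈ r ∧ j ∈ r)).toFinset.card :=
                Finset.card_le_card hsub
          _ ≤ (P.filter (fun r => i ∈ r ∧ j ∈ r)).card := Multiset.toFinset_card_le _
      rw [hcard, hdi, hdj] at h2
      norm_num at h2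
    have hcj := coord j
    rw [if_neg hji, hdj] at hcj
    have hsum : (∑ q ∈ Pts, α q * (if j ∈ q then (1:ℝ) else 0)) = α p := by
      rw [Finset.sum_eq_single_of_mem p hp]
      · rw [if_pos hjp, mul_one]
      · intro q hq hqp
        rw [if_neg (fun hjq => hqp (huniq q hq hjq)), mul_zero]
    rw [hsum] at hcj
    simpa using hcj
  intro p hp q hq
  rw [key p hp, key q hq]
end
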